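/- arXiv:2604.25773 — 8 statements merged into one kernel-verified Lean document; each statement's English description precedes it below -/
import Mathlib

section
/- Let A, C, H, Λ, a, c, h, λ be real numbers and let X, Y : ℝ³ → ℝ³ be the affine vector fields X(x,y,z) = (A x − H(((A−C)² + 1) z − Λ), Λ − (1+C²) z, 2C z + y) and Y(x,y,z) = (λ − (1+c²) z, a y − h(((a−c)² + 1) z − λ), 2c z + x), and let S : ℝ³ → ℝ³ be the involution S(x,y,z) = (−y,−x,−z). Then X(S(p)) = S(Y(p)) holds for every p ∈ ℝ³ if and only if a = A, c = C, h = H and λ = −Λ. -/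
/-- The canonical upper vector field. -/
def Xfield (A C H Λ : ℝ) (p : ℝ × ℝ × ℝ) : ℝ × ℝ × ℝ :=
  (A * p.1 - H * (((A - C) ^ 2 + 1) * p.2.2 - Λ),
   Λ - (1 + C ^ 2) * p.2.2,
   2 * C * p.2.2 + p.2.1)

/-- The canonical lower vector field. -/
def Yfield (a c h l : ℝ) (p : ℝ × ℝ × ℝ) : ℝ × ℝ × ℝ :=
  (l - (1 + c ^ 2) * p.2.2,
   a * p.2.1 - h * (((a - c) ^ 2 + 1) * p.2.2 - l),
   2 * c * p.2.2 + p.1)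

/-- The involution S(x,y,z) = (−y,−x,−z). -/
def Sinv (p : ℝ × ℝ × ℝ) : ℝ × ℝ × ℝ := (-p.2.1, -p.1, -p.2.2)

/-- Equivariance X ∘ S = S ∘ Y holds iff a = A, c = C, h = H and λ = −Λ. -/
theorem equivariance_iff (A C H Λ a c h l : ℝ) :
    (∀ p : ℝ × ℝ × ℝ, Xfield A C H Λ (Sinv p) = Sinv (Yfield a c h l p)) ↔
      (a = A ∧ c = C ∧ h = H ∧ l = -Λ) := by
  constructor
  · intro hp
    have h0 := hp (0, 0, 0)
    have h1 := hp (0, 1, 0)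
    have h2 := hp (0, 0, 1)
    simp only [Xfield, Yfield, Sinv, Prod.mk.injEq] at h0 h1 h2
    obtain ⟨e01, e02, e03⟩ := h0
    obtain ⟨e11, e12, e13⟩ := h1
    obtain ⟨e21, e22, e23⟩ := h2
    have hc : c = C := by nlinarith [e23]
    have ha : a = A := by nlinarith [e01, e11]
    have hl : l = -Λ := by nlinarith [e02]
    have hh : h = H := by
      have hk : ((A - C) ^ 2 + 1) > 0 := by positivity
      have key : H * ((A - C) ^ 2 + 1) = h * ((A - C) ^ 2 + 1) := by
        rw [ha, hc] at e21; nlinarith [e01, e21]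
      nlinarith [key]
    exact ⟨ha, hc, hh, hl⟩
  · rintro ⟨rfl, rfl, rfl, rfl⟩ p
    simp only [Xfield, Yfield, Sinv, Prod.mk.injEq]
    refine ⟨by ring, by ring, by ring⟩
end

section
/- Let A, C, H, Λ be real numbers and let X(x,y,z) = (A x − H(((A−C)² + 1) z − Λ), Λ − (1+C²) z, 2C z + y). Define f₁(x,y,z) = y² + 2C(z + Λ/(C²+1)) y + (C²+1) z² + 2Λ(C²−1) z/(C²+1) + Λ²/(C²+1). Then f₁ is a Darboux polynomial of X with cofactor 2C; that is, for every (x,y,z) ∈ ℝ³ the directional derivative of f₁ along X satisfies ∇f₁(x,y,z) · X(x,y,z) = 2C · f₁(x,y,z). -/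
/-- The Darboux polynomial f₁ of X. -/
noncomputable def fOne (C Λ : ℝ) (p : ℝ × ℝ × ℝ) : ℝ :=
  p.2.1 ^ 2 + 2 * C * (p.2.2 + Λ / (C ^ 2 + 1)) * p.2.1 + (C ^ 2 + 1) * p.2.2 ^ 2 +
    2 * Λ * (C ^ 2 - 1) * p.2.2 / (C ^ 2 + 1) + Λ ^ 2 / (C ^ 2 + 1)

/-- f₁ is a Darboux polynomial of X with cofactor 2C. -/
theorem fOne_darboux (A C H Λ : ℝ) (p : ℝ × ℝ × ℝ) :
    fderiv ℝ (fOne C Λ) p (Xfield A C H Λ p) = 2 * C * fOne C Λ p := by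
  have hC : (C : ℝ) ^ 2 + 1 ≠ 0 := by positivity
  have hy : HasFDerivAt (fun q : ℝ × ℝ × ℝ => q.2.1)
      ((ContinuousLinearMap.fst ℝ ℝ ℝ).comp (ContinuousLinearMap.snd ℝ ℝ (ℝ × ℝ))) p :=
    (hasFDerivAt_fst (𝕜 := ℝ)).comp p (hasFDerivAt_snd (𝕜 := ℝ))
  have hz : HasFDerivAt (fun q : ℝ × ℝ × ℝ => q.2.2)
      ((ContinuousLinearMap.snd ℝ ℝ ℝ).comp (ContinuousLinearMap.snd ℝ ℝ (ℝ × ℝ))) p :=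
    (hasFDerivAt_snd (𝕜 := ℝ)).comp p (hasFDerivAt_snd (𝕜 := ℝ))
  have heq : fOne C Λ = fun q : ℝ × ℝ × ℝ =>
      q.2.1 * q.2.1 + (2 * C * (q.2.2 + Λ / (C ^ 2 + 1))) * q.2.1
        + (C ^ 2 + 1) * (q.2.2 * q.2.2) + (2 * Λ * (C ^ 2 - 1) / (C ^ 2 + 1)) * q.2.2
        + Λ ^ 2 / (C ^ 2 + 1) := by
    funext q; simp only [fOne]; ring
  have hf : HasFDerivAt (fun q : ℝ × ℝ × ℝ =>
      q.2.1 * q.2.1 + (2 * C * (q.2.2 + Λ / (C ^ 2 + 1))) * q.2.1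
        + (C ^ 2 + 1) * (q.2.2 * q.2.2) + (2 * Λ * (C ^ 2 - 1) / (C ^ 2 + 1)) * q.2.2
        + Λ ^ 2 / (C ^ 2 + 1)) _ p :=
    ((((hy.mul hy).add
        (((hz.add_const (Λ / (C ^ 2 + 1))).const_mul (2 * C)).mul hy)).add
        ((hz.mul hz).const_mul (C ^ 2 + 1))).add
        (hz.const_mul (2 * Λ * (C ^ 2 - 1) / (C ^ 2 + 1)))).add_const
        (Λ ^ 2 / (C ^ 2 + 1))
  rw [heq, hf.fderiv]
  simp only [Xfield, fOne, ContinuousLinearMap.add_apply, ContinuousLinearMap.smul_apply,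
    ContinuousLinearMap.comp_apply, ContinuousLinearMap.coe_fst', ContinuousLinearMap.coe_snd',
    ContinuousLinearMap.coe_comp', Function.comp_apply, smul_eq_mul]
  field_simp
  ring
end

section
/- Let A, C, H, Λ be real numbers and let X(x,y,z) = (A x − H(((A−C)² + 1) z − Λ), Λ − (1+C²) z, 2C z + y). Define f₂(x,y,z) = x − H(Az + y). Then f₂ is a Darboux polynomial of X with cofactor A; that is, for every (x,y,z) ∈ ℝ³ the directional derivative of f₂ along X satisfies ∇f₂(x,y,z) · X(x,y,z) = A · f₂(x,y,z). -/
/-- The Darboux polynomial f₂ of X. -/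
def fTwo (A H : ℝ) (p : ℝ × ℝ × ℝ) : ℝ :=
  p.1 - H * (A * p.2.2 + p.2.1)

/-- f₂ is a Darboux polynomial of X with cofactor A. -/
theorem fTwo_darboux (A C H Λ : ℝ) (p : ℝ × ℝ × ℝ) :
    fderiv ℝ (fTwo A H) p (Xfield A C H Λ p) = A * fTwo A H p := by
  have hx : HasFDerivAt (fun q : ℝ × ℝ × ℝ => q.1) (ContinuousLinearMap.fst ℝ ℝ (ℝ × ℝ)) p :=
    hasFDerivAt_fst
  have hs : HasFDerivAt (fun q : ℝ × ℝ × ℝ => q.2) (ContinuousLinearMap.snd ℝ ℝ (ℝ × ℝ)) p :=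
    hasFDerivAt_snd
  have hy : HasFDerivAt (fun q : ℝ × ℝ × ℝ => q.2.1) _ p :=
    (hasFDerivAt_fst (𝕜 := ℝ) (p := p.2)).comp p hs
  have hz : HasFDerivAt (fun q : ℝ × ℝ × ℝ => q.2.2) _ p :=
    (hasFDerivAt_snd (𝕜 := ℝ) (p := p.2)).comp p hs
  have h : HasFDerivAt (fTwo A H) _ p :=
    hx.sub (((hz.const_mul A).add hy).const_mul H)
  rw [h.fderiv]
  simp [Xfield, fTwo, Function.comp]
  ring
end

section
/- Let X : ℝ³ → ℝ³ be a vector field, let U ⊆ ℝ³ be open, and for i = 1, …, n let fᵢ : ℝ³ → ℝ be differentiable functions with fᵢ(p) > 0 for all p ∈ U, and let kᵢ : ℝ³ → ℝ be functions such that the Lie derivative satisfies Dfᵢ(p)[X(p)] = kᵢ(p)·fᵢ(p) for all p ∈ U. Let λ₁, …, λₙ be real numbers and define F(p) = ∏ᵢ fᵢ(p)^{λᵢ} (real powers). Then F is differentiable on U and DF(p)[X(p)] = F(p) · ∑ᵢ λᵢ kᵢ(p) for all p ∈ U; in particular, DF(p)[X(p)] = 0 for all p ∈ U if and only if ∑ᵢ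 λᵢ kᵢ(p) = 0 for all p ∈ U. -/
open Finset Filter Topology

/-
Where the `fᵢ` are positive, `∏ fᵢ ^ λᵢ = exp (∑ λᵢ log fᵢ)`, so the logarithmic derivative of the
product is `∑ λᵢ Dfᵢ / fᵢ`. Along `X` each `Dfᵢ[X] / fᵢ` is the cofactor `kᵢ`, hence
`DF[X] = F · ∑ λᵢ kᵢ`; since `F > 0` this vanishes exactly when `∑ λᵢ kᵢ` does.
-/

variable {E : Type*} [NormedAddCommGroup E] [NormedSpace ℝ E] {ι : Type*}

theorem HasFDerivAt.finset_prod_rpow {s : Finset ι} {f : ι → E → ℝ} {f' : ι → E →L[ℝ] ℝ}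
    {p : E} (hf : ∀ i ∈ s, HasFDerivAt (f i) (f' i) p) (hpos : ∀ i ∈ s, 0 < f i p)
    (lam : ι → ℝ) :
    HasFDerivAt (fun q => ∏ i ∈ s, f i q ^ lam i)
      ((∏ i ∈ s, f i p ^ lam i) • ∑ i ∈ s, lam i • (f i p)⁻¹ • f' i) p := by
  have prod_eq_exp : ∀ q, (∀ i ∈ s, 0 < f i q) →
      ∏ i ∈ s, f i q ^ lam i = Real.exp (∑ i ∈ s, Real.log (f i q) * lam i) := fun q hq => by
    rw [Real.exp_sum]
    exact prod_congr rfl fun i hi => Real.rpow_def_of_pos (hq i hi) (lam i)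
  have eventually_pos : ∀ᶠ q in 𝓝 p, ∀ i ∈ s, 0 < f i q :=
    (s.eventually_all).2 fun i hi =>
      (hf i hi).continuousAt.eventually (lt_mem_nhds (hpos i hi))
  have hexp : HasFDerivAt (fun q => Real.exp (∑ i ∈ s, Real.log (f i q) * lam i))
      (Real.exp (∑ i ∈ s, Real.log (f i p) * lam i) • ∑ i ∈ s, lam i • (f i p)⁻¹ • f' i) p :=
    (HasFDerivAt.fun_sum fun i hi =>
      ((hf i hi).log (hpos i hi).ne').mul_const (lam i)).exp
  rw [prod_eq_exp p hpos]
  exact hexp.congr_of_eventuallyEq (eventually_pos.mono prod_eq_exp)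

theorem fderiv_finset_prod_rpow_apply_of_cofactor {s : Finset ι} {f k : ι → E → ℝ} {p v : E}
    (hf : ∀ i ∈ s, DifferentiableAt ℝ (f i) p) (hpos : ∀ i ∈ s, 0 < f i p)
    (hcofactor : ∀ i ∈ s, fderiv ℝ (f i) p v = k i p * f i p) (lam : ι → ℝ) :
    fderiv ℝ (fun q => ∏ i ∈ s, f i q ^ lam i) p v =
      (∏ i ∈ s, f i p ^ lam i) * ∑ i ∈ s, lam i * k i p := by
  rw [(HasFDerivAt.finset_prod_rpow (fun i hi => (hf i hi).hasFDerivAt) hpos lam).fderiv]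
  simp only [smul_apply, FunLike.coe_sum, Finset.sum_apply, smul_eq_mul]
  congr 1
  refine sum_congr rfl fun i hi => ?_
  rw [hcofactor i hi]
  field_simp [(hpos i hi).ne']

theorem darboux_first_integral_general (n : ℕ) (X : (ℝ × ℝ × ℝ) → ℝ × ℝ × ℝ)
    (U : Set (ℝ × ℝ × ℝ))
    (f : Fin n → (ℝ × ℝ × ℝ) → ℝ) (k : Fin n → (ℝ × ℝ × ℝ) → ℝ) (lam : Fin n → ℝ)
    (hdiff : ∀ i, ∀ p ∈ U, DifferentiableAt ℝ (f i) p)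
    (hpos : ∀ i, ∀ p ∈ U, 0 < f i p)
    (hdarboux : ∀ i, ∀ p ∈ U, fderiv ℝ (f i) p (X p) = k i p * f i p)
    (F : (ℝ × ℝ × ℝ) → ℝ)
    (hF : ∀ p, F p = ∏ i : Fin n, (f i p) ^ (lam i)) :
    (∀ p ∈ U, DifferentiableAt ℝ F p) ∧
    (∀ p ∈ U, fderiv ℝ F p (X p) = F p * ∑ i : Fin n, lam i * k i p) ∧
    ((∀ p ∈ U, fderiv ℝ F p (X p) = 0) ↔ (∀ p ∈ U, ∑ i : Fin n, lam i * k i p = 0)) := by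
  obtain rfl : F = fun p => ∏ i : Fin n, f i p ^ lam i := funext hF
  have hlie : ∀ p ∈ U, fderiv ℝ (fun q => ∏ i : Fin n, f i q ^ lam i) p (X p) =
      (∏ i : Fin n, f i p ^ lam i) * ∑ i : Fin n, lam i * k i p := fun p hp =>
    fderiv_finset_prod_rpow_apply_of_cofactor (fun i _ => hdiff i p hp) (fun i _ => hpos i p hp)
      (fun i _ => hdarboux i p hp) lam
  refine ⟨fun p hp => ?_, hlie, forall₂_congr fun p hp => ?_⟩
  · exact (HasFDerivAt.finset_prod_rpow (fun i _ => (hdiff i p hp).hasFDerivAt)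
      (fun i _ => hpos i p hp) lam).differentiableAt
  · have hFpos : 0 < ∏ i : Fin n, f i p ^ lam i :=
      prod_pos fun i _ => Real.rpow_pos_of_pos (hpos i p hp) _
    rw [hlie p hp, mul_eq_zero_iff_left hFpos.ne']

/-- Darboux integrability criterion: if fᵢ are positive Darboux functions of X on the
open set U with cofactors kᵢ, then F = ∏ fᵢ^{λᵢ} is differentiable on U with
DF(p)[X(p)] = F(p)·∑ λᵢkᵢ(p); in particular F is a first integral on U iff
∑ λᵢkᵢ vanishes on U. -/
theorem darboux_first_integral (n : ℕ) (X : (ℝ × ℝ × ℝ) → ℝ × ℝ × ℝ)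
    (U : Set (ℝ × ℝ × ℝ)) (hU : IsOpen U)
    (f : Fin n → (ℝ × ℝ × ℝ) → ℝ) (k : Fin n → (ℝ × ℝ × ℝ) → ℝ) (lam : Fin n → ℝ)
    (hdiff : ∀ i, ∀ p ∈ U, DifferentiableAt ℝ (f i) p)
    (hpos : ∀ i, ∀ p ∈ U, 0 < f i p)
    (hdarboux : ∀ i, ∀ p ∈ U, fderiv ℝ (f i) p (X p) = k i p * f i p)
    (F : (ℝ × ℝ × ℝ) → ℝ)
    (hF : ∀ p, F p = ∏ i : Fin n, (f i p) ^ (lam i)) :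
    (∀ p ∈ U, DifferentiableAt ℝ F p) ∧
    (∀ p ∈ U, fderiv ℝ F p (X p) = F p * ∑ i : Fin n, lam i * k i p) ∧
    ((∀ p ∈ U, fderiv ℝ F p (X p) = 0) ↔ (∀ p ∈ U, ∑ i : Fin n, lam i * k i p = 0)) :=
  darboux_first_integral_general n X U f k lam hdiff hpos hdarboux F hF
end

section
/- Let A, C, H, Λ be real numbers with A ≠ 0, and let X(x,y,z) = (A x − H(((A−C)² + 1) z − Λ), Λ − (1+C²) z, 2C z + y). Define f₁(x,y,z) = y² + 2C(z + Λ/(C²+1)) y + (C²+1) z² + 2Λ(C²−1) z/(C²+1) + Λ²/(C²+1) and f₂(x,y,z) = x − H(Az + y), and set P_X(p) = f₁(p) · (f₂(p))^{−2C/A} (real power). Then P_X is a first integral of X on the open set U = {p ∈ ℝ³ : f₂(p) > 0}; that is, P_X is differentiable on U and DP_X(p)[X(p)] = 0 for every p ∈ U. -/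
/-- The Darboux first integral P_X = f₁·f₂^{−2C/A}. -/
noncomputable def PX (A C H Λ : ℝ) (p : ℝ × ℝ × ℝ) : ℝ :=
  fOne C Λ p * (fTwo A H p) ^ (-(2 * C) / A)

/-! If `X·f = a f` and `X·g = b g`, the Leibniz rule gives `X·(f g^r) = (a + r b) f g^r` wherever
`g > 0`; for `r = -a/b` this cofactor vanishes. The theorem is the case `f = f₁`, `g = f₂`, whose
cofactors `2C` and `A` are checked by direct computation. -/

open ContinuousLinearMap

section Darboux

variable {E : Type*} [NormedAddCommGroup E] [NormedSpace ℝ E]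

def IsDarbouxAt (X : E → E) (f : E → ℝ) (k : ℝ) (x : E) : Prop :=
  DifferentiableAt ℝ f x ∧ fderiv ℝ f x (X x) = k * f x

variable {X : E → E} {f g : E → ℝ} {a b : ℝ} {x : E}

theorem IsDarbouxAt.mul_rpow (hf : IsDarbouxAt X f a x) (hg : IsDarbouxAt X g b x)
    (hgx : 0 < g x) (r : ℝ) : IsDarbouxAt X (fun y => f y * g y ^ r) (a + r * b) x := by
  have hderiv : HasFDerivAt (fun y => f y * g y ^ r) _ x :=
    hf.1.hasFDerivAt.mul (hg.1.hasFDerivAt.rpow_const (Or.inl hgx.ne'))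
  refine ⟨hderiv.differentiableAt, ?_⟩
  rw [hderiv.fderiv]
  simp only [add_apply, smul_apply, smul_eq_mul, hf.2, hg.2]
  rw [Real.rpow_sub_one hgx.ne']
  field_simp
  ring

theorem IsDarbouxAt.mul_rpow_neg_div (hf : IsDarbouxAt X f a x) (hg : IsDarbouxAt X g b x)
    (hgx : 0 < g x) (hb : b ≠ 0) : IsDarbouxAt X (fun y => f y * g y ^ (-a / b)) 0 x := by
  simpa [div_mul_cancel₀ _ hb] using hf.mul_rpow hg hgx (-a / b)

end Darboux

section Coordinates

variable (p : ℝ × ℝ × ℝ)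

theorem hasFDerivAt_coord_y :
    HasFDerivAt (fun q : ℝ × ℝ × ℝ => q.2.1) ((fst ℝ ℝ ℝ).comp (snd ℝ ℝ (ℝ × ℝ))) p :=
  hasFDerivAt_fst.comp p hasFDerivAt_snd

theorem hasFDerivAt_coord_z :
    HasFDerivAt (fun q : ℝ × ℝ × ℝ => q.2.2) ((snd ℝ ℝ ℝ).comp (snd ℝ ℝ (ℝ × ℝ))) p :=
  hasFDerivAt_snd.comp p hasFDerivAt_snd

end Coordinates

section CanonicalUpperField

variable (A C H Λ : ℝ) (p : ℝ × ℝ × ℝ)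

theorem isDarbouxAt_fTwo : IsDarbouxAt (Xfield A C H Λ) (fTwo A H) A p := by
  have hderiv : HasFDerivAt (fTwo A H) _ p := hasFDerivAt_fst.sub
    ((((hasFDerivAt_coord_z p).const_mul A).add (hasFDerivAt_coord_y p)).const_mul H)
  refine ⟨hderiv.differentiableAt, ?_⟩
  rw [hderiv.fderiv]
  simp only [Xfield, fTwo, sub_apply, add_apply, smul_apply, comp_apply, coe_fst', coe_snd',
    smul_eq_mul]
  ring

theorem isDarbouxAt_fOne : IsDarbouxAt (Xfield A C H Λ) (fOne C Λ) (2 * C) p := by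
  have hy := hasFDerivAt_coord_y p
  have hz := hasFDerivAt_coord_z p
  have hderiv : HasFDerivAt (fOne C Λ) _ p :=
    ((((hy.pow 2).add (((hz.add_const _).const_mul (2 * C)).mul hy)).add
      ((hz.pow 2).const_mul _)).add
        ((hz.const_mul (2 * Λ * (C ^ 2 - 1))).mul_const (C ^ 2 + 1)⁻¹)).add_const _
  refine ⟨hderiv.differentiableAt, ?_⟩
  rw [hderiv.fderiv]
  simp only [Xfield, fOne, add_apply, smul_apply, comp_apply, coe_fst', coe_snd', smul_eq_mul,
    nsmul_eq_mul, Nat.cast_ofNat, Nat.add_one_sub_one, pow_one]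
  field_simp
  ring

end CanonicalUpperField

/-- P_X is a first integral of X on the set where f₂ > 0. -/
theorem PX_first_integral (A C H Λ : ℝ) (hA : A ≠ 0) :
    ∀ p ∈ {p : ℝ × ℝ × ℝ | 0 < fTwo A H p},
      DifferentiableAt ℝ (PX A C H Λ) p ∧
        fderiv ℝ (PX A C H Λ) p (Xfield A C H Λ p) = 0 := by
  intro p hp
  have h := (isDarbouxAt_fOne A C H Λ p).mul_rpow_neg_div (isDarbouxAt_fTwo A C H Λ p) hp hA
  exact ⟨h.1, h.2.trans (zero_mul _)⟩
end

section
/- Let C, Λ be real numbers with Λ ≠ 0, and define F₁ : ℝ × ℝ → ℝ by F₁(v, τ) = ((cos τ − C sin τ)·Λ·v − (C²+1)·sin τ)·e^{C(τ+π)} + Λ·v. Then F₁(0,0) = 0 and ∂F₁/∂τ(0,0) = −(C²+1)e^{πC} ≠ 0, and there exist ε > 0 and a function τ : ℝ → ℝ, analytic at 0, such that τ(0) = 0, F₁(v, τ(v)) = 0 for all |v| < ε, with first derivative τ′(0) = (1 + e^{−πC})Λ/(C²+1) and second derivative τ″(0) = −2C·((1 + e^{−πC})Λ/(C²+1))². 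-/
/-!
`F₁` is affine in `v`: `F₁(v, τ) = v · D(τ) - N(τ)` with `N = closingNum` and `D = closingDen`
analytic and `D(0) = Λ (e^{πC} + 1) ≠ 0`, so near `τ = 0` the closing equation reads
`v = g(τ) := N(τ) / D(τ)` (`g = closingRatio`). Here `g(0) = 0` and
`g'(0) = (C² + 1) / ((1 + e^{-πC}) Λ) ≠ 0`, so the analytic inverse function theorem yields the
flight time as the local inverse `τ = g⁻¹`, with `τ'(0) = 1 / g'(0)`. Differentiating
`g (τ v) = v` twice gives `g''(0) τ'(0)² + g'(0) τ''(0) = 0`, and `g''(0) = 2C g'(0)` because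
`D' = -Λ N` vanishes at `0` and `N''(0) = 2C N'(0)`; hence `τ''(0) = -2C τ'(0)²`.
-/

open Real Filter Topology

/-- The desingularized half-return closing function F₁ for the field X. -/
noncomputable def Fclose (C Λ v τ : ℝ) : ℝ :=
  ((Real.cos τ - C * Real.sin τ) * Λ * v - (C ^ 2 + 1) * Real.sin τ) *
    Real.exp (C * (τ + π)) + Λ * v

section LeftInverse

variable {𝕜 : Type*} [NontriviallyNormedField 𝕜] [CompleteSpace 𝕜] {f g : 𝕜 → 𝕜} {y : 𝕜}

theorem eventually_deriv_mul_deriv_eq_one_of_leftInverse (hf : AnalyticAt 𝕜 f y)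
    (hg : AnalyticAt 𝕜 g (f y)) (hgf : g ∘ f =ᶠ[𝓝 y] id) :
    (fun z => deriv g (f z) * deriv f z) =ᶠ[𝓝 y] fun _ => 1 := by
  have hg_near : ∀ᶠ z in 𝓝 y, AnalyticAt 𝕜 g (f z) :=
    hf.continuousAt.eventually hg.eventually_analyticAt
  filter_upwards [hgf.eventuallyEq_nhds, hf.eventually_analyticAt, hg_near] with z hz hfz hgz
  have hcomp := hgz.differentiableAt.hasDerivAt.comp z hfz.differentiableAt.hasDerivAt
  rw [← hcomp.deriv, hz.deriv_eq, deriv_id]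

theorem iteratedDeriv_two_mul_deriv_sq_add_of_leftInverse (hf : AnalyticAt 𝕜 f y)
    (hg : AnalyticAt 𝕜 g (f y)) (hgf : g ∘ f =ᶠ[𝓝 y] id) :
    iteratedDeriv 2 g (f y) * deriv f y ^ 2 + deriv g (f y) * iteratedDeriv 2 f y = 0 := by
  have hdg : HasDerivAt (fun z => deriv g (f z)) (iteratedDeriv 2 g (f y) * deriv f y) y := by
    rw [iteratedDeriv_succ, iteratedDeriv_one]
    exact hg.deriv.differentiableAt.hasDerivAt.comp y hf.differentiableAt.hasDerivAt
  have hdf : HasDerivAt (deriv f) (iteratedDeriv 2 f y) y := by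
    rw [iteratedDeriv_succ, iteratedDeriv_one]
    exact hf.deriv.differentiableAt.hasDerivAt
  have hconst : HasDerivAt (fun z => deriv g (f z) * deriv f z) 0 y :=
    (hasDerivAt_const y (1 : 𝕜)).congr_of_eventuallyEq
      (eventually_deriv_mul_deriv_eq_one_of_leftInverse hf hg hgf)
  rw [sq, ← mul_assoc]
  exact (hdg.mul hdf).unique hconst

theorem AnalyticAt.exists_analyticAt_rightInverse [CharZero 𝕜] {x : 𝕜} (hg : AnalyticAt 𝕜 g x)
    (hg' : deriv g x ≠ 0) :
    ∃ f : 𝕜 → 𝕜, AnalyticAt 𝕜 f (g x) ∧ f (g x) = x ∧ g ∘ f =ᶠ[𝓝 (g x)] id ∧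
      deriv g x * deriv f (g x) = 1 ∧
      iteratedDeriv 2 g x * deriv f (g x) ^ 2 + deriv g x * iteratedDeriv 2 f (g x) = 0 := by
  obtain ⟨f, hf, hfx, hgf⟩ :
      ∃ f : 𝕜 → 𝕜, AnalyticAt 𝕜 f (g x) ∧ f (g x) = x ∧ g ∘ f =ᶠ[𝓝 (g x)] id :=
    ⟨_, hg.analyticAt_localInverse hg', HasStrictFDerivAt.localInverse_apply_image ..,
      HasStrictDerivAt.eventually_right_inverse ..⟩
  have hg_at : AnalyticAt 𝕜 g (f (g x)) := by rwa [hfx]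
  refine ⟨f, hf, hfx, hgf, ?_, ?_⟩
  · simpa only [hfx] using
      (eventually_deriv_mul_deriv_eq_one_of_leftInverse hf hg_at hgf).self_of_nhds
  · simpa only [hfx] using iteratedDeriv_two_mul_deriv_sq_add_of_leftInverse hf hg_at hgf

end LeftInverse

noncomputable section

namespace HalfReturn

variable (C Λ : ℝ)

def closingNum (τ : ℝ) : ℝ := (C ^ 2 + 1) * sin τ * exp (C * (τ + π))

def closingDen (τ : ℝ) : ℝ := Λ * ((cos τ - C * sin τ) * exp (C * (τ + π)) + 1)

def closingRatio : ℝ → ℝ := closingNum C / closingDen C Λ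

theorem Fclose_eq (v τ : ℝ) : Fclose C Λ v τ = v * closingDen C Λ τ - closingNum C τ := by
  simp only [Fclose, closingNum, closingDen]; ring

theorem analyticAt_closingNum (τ : ℝ) : AnalyticAt ℝ (closingNum C) τ := by
  unfold closingNum; fun_prop

theorem analyticAt_closingDen (τ : ℝ) : AnalyticAt ℝ (closingDen C Λ) τ := by
  unfold closingDen; fun_prop

theorem closingNum_zero : closingNum C 0 = 0 := by simp [closingNum]

theorem closingDen_zero : closingDen C Λ 0 = Λ * (exp (C * π) + 1) := by simp [closingDen]

theorem closingRatio_zero : closingRatio C Λ 0 = 0 := by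
  simp [closingRatio, closingNum_zero]

theorem hasDerivAt_exp_const_mul_add_pi (τ : ℝ) :
    HasDerivAt (fun t => exp (C * (t + π))) (exp (C * (τ + π)) * C) τ := by
  simpa using (((hasDerivAt_id τ).add_const π).const_mul C).exp

theorem deriv_closingNum :
    deriv (closingNum C) = fun τ => (C ^ 2 + 1) * (cos τ + C * sin τ) * exp (C * (τ + π)) := by
  funext τ
  refine ((((hasDerivAt_sin τ).const_mul (C ^ 2 + 1)).mul
    (hasDerivAt_exp_const_mul_add_pi C τ)).congr_deriv ?_).deriv
  ring

theorem hasDerivAt_closingDen (τ : ℝ) :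
    HasDerivAt (closingDen C Λ) (-Λ * closingNum C τ) τ := by
  refine (((((hasDerivAt_cos τ).sub ((hasDerivAt_sin τ).const_mul C)).mul
    (hasDerivAt_exp_const_mul_add_pi C τ)).add_const 1).const_mul Λ).congr_deriv ?_
  simp only [Pi.sub_apply, closingNum]; ring

theorem iteratedDeriv_two_closingNum_zero :
    iteratedDeriv 2 (closingNum C) 0 = 2 * C * deriv (closingNum C) 0 := by
  rw [iteratedDeriv_succ, iteratedDeriv_one, deriv_closingNum]
  refine (((((hasDerivAt_cos 0).add ((hasDerivAt_sin 0).const_mul C)).const_mul (C ^ 2 + 1)).mul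
    (hasDerivAt_exp_const_mul_add_pi C 0)).congr_deriv ?_).deriv
  simp only [sin_zero, neg_zero, cos_zero, mul_one, zero_add, Pi.add_apply, mul_zero, add_zero]
  ring

theorem deriv_Fclose_zero : deriv (fun τ => Fclose C Λ 0 τ) 0 = -(C ^ 2 + 1) * exp (π * C) := by
  simp only [Fclose_eq, zero_mul, zero_sub, deriv.fun_neg, deriv_closingNum]
  simp only [cos_zero, sin_zero, mul_zero, add_zero, mul_one, zero_add, mul_comm C π]
  ring

variable {C Λ}

theorem closingDen_zero_ne_zero (hΛ : Λ ≠ 0) : closingDen C Λ 0 ≠ 0 := by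
  rw [closingDen_zero]; positivity

theorem hasDerivAt_inv_closingDen_zero (hΛ : Λ ≠ 0) :
    HasDerivAt (closingDen C Λ)⁻¹ 0 0 := by
  simpa [closingNum_zero] using (hasDerivAt_closingDen C Λ 0).inv (closingDen_zero_ne_zero hΛ)

theorem analyticAt_closingRatio (hΛ : Λ ≠ 0) : AnalyticAt ℝ (closingRatio C Λ) 0 :=
  (analyticAt_closingNum C 0).div (analyticAt_closingDen C Λ 0) (closingDen_zero_ne_zero hΛ)

theorem deriv_closingRatio_zero_eq_div (hΛ : Λ ≠ 0) :
    deriv (closingRatio C Λ) 0 = deriv (closingNum C) 0 / closingDen C Λ 0 := by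
  rw [closingRatio, div_eq_mul_inv]
  simpa [closingNum_zero, div_eq_mul_inv] using
    ((analyticAt_closingNum C 0).differentiableAt.hasDerivAt.mul
      (hasDerivAt_inv_closingDen_zero hΛ)).deriv

theorem deriv_closingRatio_zero (hΛ : Λ ≠ 0) :
    deriv (closingRatio C Λ) 0 = (C ^ 2 + 1) / ((1 + exp (-π * C)) * Λ) := by
  have hexp : exp (-π * C) = (exp (C * π))⁻¹ := by rw [← exp_neg]; ring_nf
  rw [deriv_closingRatio_zero_eq_div hΛ, deriv_closingNum, closingDen_zero, hexp]
  field_simp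
  simp

theorem iteratedDeriv_two_closingRatio_zero (hΛ : Λ ≠ 0) :
    iteratedDeriv 2 (closingRatio C Λ) 0 = 2 * C * deriv (closingRatio C Λ) 0 := by
  have hR : ContDiffAt ℝ 2 (closingDen C Λ)⁻¹ 0 :=
    ((analyticAt_closingDen C Λ 0).inv (closingDen_zero_ne_zero hΛ)).contDiffAt
  rw [closingRatio, div_eq_mul_inv, iteratedDeriv_mul (analyticAt_closingNum C 0).contDiffAt hR,
    ← div_eq_mul_inv, ← closingRatio, deriv_closingRatio_zero_eq_div hΛ]
  simp [Finset.sum_range_succ, closingNum_zero, (hasDerivAt_inv_closingDen_zero hΛ).deriv,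
    iteratedDeriv_two_closingNum_zero, div_eq_mul_inv, mul_assoc]

theorem Fclose_eq_zero_of_closingRatio_eq {v τ : ℝ} (hD : closingDen C Λ τ ≠ 0)
    (h : closingRatio C Λ τ = v) : Fclose C Λ v τ = 0 := by
  rw [Fclose_eq, ← h, closingRatio, Pi.div_apply, div_mul_cancel₀ _ hD, sub_self]

theorem eventually_Fclose_eq_zero_of_rightInverse (hΛ : Λ ≠ 0) {τ : ℝ → ℝ}
    (hτ : ContinuousAt τ 0) (hτ0 : τ 0 = 0) (hgτ : closingRatio C Λ ∘ τ =ᶠ[𝓝 0] id) :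
    ∀ᶠ v in 𝓝 0, Fclose C Λ v (τ v) = 0 := by
  have hD : ∀ᶠ v in 𝓝 0, closingDen C Λ (τ v) ≠ 0 :=
    hτ.eventually ((analyticAt_closingDen C Λ _).continuousAt.eventually_ne
      (by rw [hτ0]; exact closingDen_zero_ne_zero hΛ))
  filter_upwards [hgτ, hD] with v hv hDv using Fclose_eq_zero_of_closingRatio_eq hDv hv

end HalfReturn

end

open HalfReturn in
/-- The desingularized closing equation F₁(v,τ) = 0 has an analytic solution τ(v)
near v = 0 with the stated first and second derivatives at 0. -/
theorem half_return_time_analytic (C Λ : ℝ) (hΛ : Λ ≠ 0) :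
    Fclose C Λ 0 0 = 0 ∧
    deriv (fun τ => Fclose C Λ 0 τ) 0 = -(C ^ 2 + 1) * Real.exp (π * C) ∧
    -(C ^ 2 + 1) * Real.exp (π * C) ≠ 0 ∧
    ∃ ε > 0, ∃ τ : ℝ → ℝ, AnalyticAt ℝ τ 0 ∧ τ 0 = 0 ∧
      (∀ v : ℝ, |v| < ε → Fclose C Λ v (τ v) = 0) ∧
      deriv τ 0 = (1 + Real.exp (-π * C)) * Λ / (C ^ 2 + 1) ∧
      iteratedDeriv 2 τ 0 =
        -2 * C * ((1 + Real.exp (-π * C)) * Λ / (C ^ 2 + 1)) ^ 2 := by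
  have hg' : deriv (closingRatio C Λ) 0 ≠ 0 := by
    rw [deriv_closingRatio_zero hΛ]; positivity
  obtain ⟨τ, hτ, hτ0, hgτ, hd1, hd2⟩ :=
    (analyticAt_closingRatio hΛ).exists_analyticAt_rightInverse hg'
  rw [closingRatio_zero] at hτ hτ0 hgτ hd1 hd2
  rw [iteratedDeriv_two_closingRatio_zero hΛ] at hd2
  obtain ⟨ε, hε, hball⟩ := Metric.eventually_nhds_iff.mp
    (eventually_Fclose_eq_zero_of_rightInverse hΛ hτ.continuousAt hτ0 hgτ)
  have hτ' : deriv τ 0 = (1 + exp (-π * C)) * Λ / (C ^ 2 + 1) := by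
    rw [eq_inv_of_mul_eq_one_right hd1, deriv_closingRatio_zero hΛ, inv_div]
  refine ⟨by simp [Fclose], deriv_Fclose_zero C Λ,
    mul_ne_zero (neg_ne_zero.mpr (by positivity)) (exp_pos _).ne', ε, hε, τ, hτ, hτ0,
    fun v hv => hball (by simpa [Real.dist_eq] using hv), hτ', ?_⟩
  rw [← hτ']
  exact mul_left_cancel₀ hg' (by linear_combination hd2)
end

section
/- Let C > 0 be a real number and set H = 1/(2·cosh(πC) − 1). Then √(−3H² + 2H + 1) = 2H·e^{πC} − H − 1, where the right-hand side is nonnegative. Consequently, for any Λ, the first coefficients of the half-return time expansions agree: (1 + e^{−πC})Λ/(C²+1) = 2HΛ(e^{πC} + 1)/((C²+1)(√(−3H²+2H+1) + H + 1)); that is, the first coefficient γ₁ = γ₁^X − γ₁^Y of the time-matching function vanishes at H = H̄. -/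
/-!
Put `t = exp (π C)`. Then `2 cosh (π C) - 1 = (t² - t + 1) / t`, so the critical slope is
characterised by `H (t² - t + 1) = t`. Under this relation the discriminant
`-3H² + 2H + 1` is the square of `2Ht - H - 1 = (t² - 1) / (t² - t + 1)`, which is
nonnegative as `t > 1`. Hence `√D + H + 1 = 2Ht`, and both leading coefficients reduce to
`Λ (t + 1) / (t (C² + 1))`.
-/

open Real

theorem one_div_two_mul_cosh_sub_one_mul (x : ℝ) :
    1 / (2 * cosh x - 1) * (exp x ^ 2 - exp x + 1) = exp x := by
  have hq : exp x ^ 2 - exp x + 1 ≠ 0 := by nlinarith [sq_nonneg (exp x - 1)]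
  have hcosh : 2 * cosh x - 1 = (exp x ^ 2 - exp x + 1) / exp x := by
    rw [cosh_eq, exp_neg]
    field_simp [(exp_pos x).ne']
    ring
  rw [hcosh, one_div_div, div_mul_cancel₀ _ hq]

section CriticalSlope

variable {t H : ℝ}

theorem two_mul_mul_sub_sub_one_mul (hH : H * (t ^ 2 - t + 1) = t) :
    (2 * H * t - H - 1) * (t ^ 2 - t + 1) = t ^ 2 - 1 := by
  linear_combination (2 * t - 1) * hH

theorem neg_three_mul_sq_add_two_mul_add_one_eq_sq (hH : H * (t ^ 2 - t + 1) = t) :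
    -3 * H ^ 2 + 2 * H + 1 = (2 * H * t - H - 1) ^ 2 := by
  linear_combination (-4 * H) * hH

theorem two_mul_mul_sub_sub_one_nonneg (hH : H * (t ^ 2 - t + 1) = t) (ht : 1 ≤ t) :
    0 ≤ 2 * H * t - H - 1 := by
  have hq : 0 < t ^ 2 - t + 1 := by nlinarith
  refine nonneg_of_mul_nonneg_left ?_ hq
  rw [two_mul_mul_sub_sub_one_mul hH]
  nlinarith

theorem sqrt_neg_three_mul_sq_add_two_mul_add_one (hH : H * (t ^ 2 - t + 1) = t) (ht : 1 ≤ t) :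
    √(-3 * H ^ 2 + 2 * H + 1) = 2 * H * t - H - 1 := by
  rw [neg_three_mul_sq_add_two_mul_add_one_eq_sq hH,
    sqrt_sq (two_mul_mul_sub_sub_one_nonneg hH ht)]

theorem one_add_inv_mul_div_eq (hH : H * (t ^ 2 - t + 1) = t) (ht : t ≠ 0) (Λ c : ℝ) :
    (1 + t⁻¹) * Λ / c = 2 * H * Λ * (t + 1) / (c * (2 * H * t - H - 1 + H + 1)) := by
  have hH0 : H ≠ 0 := by
    rintro rfl
    exact ht (by linarith)
  rw [show 2 * H * t - H - 1 + H + 1 = H * (2 * t) by ring]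
  field_simp

end CriticalSlope

/-- At the critical slope H = 1/(2cosh(πC) − 1) with C > 0, one has
√(−3H²+2H+1) = 2H·e^{πC} − H − 1 ≥ 0, and consequently the leading coefficients of
the half-return time expansions of X and Y coincide: the first coefficient of the
time-matching function vanishes. -/
theorem first_coefficient_vanishes (C : ℝ) (hC : 0 < C) :
    let H : ℝ := 1 / (2 * Real.cosh (π * C) - 1)
    (0 ≤ 2 * H * Real.exp (π * C) - H - 1) ∧
    Real.sqrt (-3 * H ^ 2 + 2 * H + 1) = 2 * H * Real.exp (π * C) - H - 1 ∧
    ∀ Λ : ℝ,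
      (1 + Real.exp (-π * C)) * Λ / (C ^ 2 + 1) =
        2 * H * Λ * (Real.exp (π * C) + 1) /
          ((C ^ 2 + 1) * (Real.sqrt (-3 * H ^ 2 + 2 * H + 1) + H + 1)) := by
  intro H
  have hH : H * (exp (π * C) ^ 2 - exp (π * C) + 1) = exp (π * C) :=
    one_div_two_mul_cosh_sub_one_mul (π * C)
  have ht : 1 ≤ exp (π * C) := one_le_exp (by positivity)
  have hsqrt := sqrt_neg_three_mul_sq_add_two_mul_add_one hH ht
  refine ⟨two_mul_mul_sub_sub_one_nonneg hH ht, hsqrt, fun Λ => ?_⟩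
  rw [hsqrt, neg_mul, exp_neg]
  exact one_add_inv_mul_div_eq hH (exp_pos _).ne' Λ _
end

section
/- For every real number C, the quantity 1 + 2e^{−πC} − e^{2πC} + e^{−2πC} + e^{4πC} + 2e^{3πC} is strictly positive. Consequently, for all C ≠ 0 and Λ ≠ 0, the second coefficient of the time-matching function at the critical slope H̄ = 1/(2cosh(πC)−1), given by γ₂ = −CΛ²(1 + 2e^{−πC} − e^{2πC} + e^{−2πC} + e^{4πC} + 2e^{3πC})/(C²+1)² for C < 0 and γ₂ = −2Λ²C(e^{−πC} + 1 + e^{−2πC})/(C²+1)² for C > 0, is nonzero. -/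
open Real

lemma expcomb_pos (C : ℝ) : 0 < 1 + 2 * Real.exp (-π * C) - Real.exp (2 * π * C) +
    Real.exp (-2 * π * C) + Real.exp (4 * π * C) + 2 * Real.exp (3 * π * C) := by
  have h4 : Real.exp (4 * π * C) = Real.exp (2 * π * C) * Real.exp (2 * π * C) := by
    rw [← Real.exp_add]; ring_nf
  nlinarith [sq_nonneg (Real.exp (2 * π * C) - 1), Real.exp_pos (-π * C),
    Real.exp_pos (-2 * π * C), Real.exp_pos (3 * π * C), Real.exp_pos (2 * π * C)]

/-- The exponential combination appearing in γ₂ is positive for every C, and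
consequently the second coefficient of the time-matching function at the
critical slope is nonzero for all C ≠ 0 and Λ ≠ 0. -/
theorem second_coefficient_nonzero :
    (∀ C : ℝ, 0 < 1 + 2 * Real.exp (-π * C) - Real.exp (2 * π * C) +
        Real.exp (-2 * π * C) + Real.exp (4 * π * C) + 2 * Real.exp (3 * π * C)) ∧
    (∀ C Λ : ℝ, C ≠ 0 → Λ ≠ 0 →
      (C < 0 →
        -C * Λ ^ 2 * (1 + 2 * Real.exp (-π * C) - Real.exp (2 * π * C) +
            Real.exp (-2 * π * C) + Real.exp (4 * π * C) + 2 * Real.exp (3 * π * C)) /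
          (C ^ 2 + 1) ^ 2 ≠ 0) ∧
      (0 < C →
        -2 * Λ ^ 2 * C * (Real.exp (-π * C) + 1 + Real.exp (-2 * π * C)) /
          (C ^ 2 + 1) ^ 2 ≠ 0)) := by
  refine ⟨expcomb_pos, fun C Λ hC hΛ => ⟨fun hneg => ?_, fun hpos => ?_⟩⟩
  · have hE := expcomb_pos C
    have hL : (0:ℝ) < Λ ^ 2 := by positivity
    have hden : (0:ℝ) < (C ^ 2 + 1) ^ 2 := by positivity
    have : 0 < -C * Λ ^ 2 * (1 + 2 * Real.exp (-π * C) - Real.exp (2 * π * C) +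
        Real.exp (-2 * π * C) + Real.exp (4 * π * C) + 2 * Real.exp (3 * π * C)) /
        (C ^ 2 + 1) ^ 2 :=
      div_pos (mul_pos (mul_pos (by linarith) hL) hE) hden
    exact ne_of_gt this
  · have hP : 0 < Real.exp (-π * C) + 1 + Real.exp (-2 * π * C) := by positivity
    have hL : (0:ℝ) < Λ ^ 2 := by positivity
    have hden : (0:ℝ) < (C ^ 2 + 1) ^ 2 := by positivity
    have hnum : -2 * Λ ^ 2 * C * (Real.exp (-π * C) + 1 + Real.exp (-2 * π * C)) < 0 := by
      nlinarith [mul_pos (mul_pos (mul_pos hL hpos) hP) (by norm_num : (0:ℝ) < 2)]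
    exact ne_of_lt (div_neg_of_neg_of_pos hnum hden)
end
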